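/- arXiv:1603.08094 — 4 statements merged into one kernel-verified Lean document; each statement's English description precedes it below -/
import Mathlib

section
/- Let W be a real symmetric n×n matrix with nonnegative entries satisfying W𝟙 = 𝟙, and let α ≥ 0. Then the matrix B = α(I − 2·diag(W) + W) is symmetric positive semidefinite, where diag(W) denotes the diagonal matrix whose diagonal entries agree with those of W and whose off-diagonal entries are zero. -/
open Matrix
open scoped ComplexOrder

/-!
On the diagonal, `I - 2 diag(W) + W` has the entries `1 - W i i ≥ 0`; off the diagonal it agrees
with `W`, whose off-diagonal entries in row `i` are nonnegative and sum to `1 - W i i`. So it is a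
symmetric, weakly diagonally dominant matrix with nonnegative diagonal, and by Gershgorin's
circle theorem each of its real eigenvalues lies in an interval `[d - r, d + r]` with `r ≤ d`.
-/

namespace Matrix

variable {n : Type*} [DecidableEq n]

theorem one_sub_two_smul_diagonal_add_apply {R : Type*} [Ring R] (W : Matrix n n R) (i j : n) :
    (1 - 2 • diagonal (fun k => W k k) + W : Matrix n n R) i j =
      if i = j then 1 - W i i else W i j := by
  by_cases h : i = j
  · subst h
    simp only [if_pos, add_apply, sub_apply, smul_apply, one_apply_eq, diagonal_apply_eq]
    abel
  · simp only [if_neg h, add_apply, sub_apply, smul_apply, one_apply_ne h, diagonal_apply_ne _ h,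
      smul_zero, sub_zero, zero_add]

variable [Fintype n] {𝕜 : Type*} [RCLike 𝕜]

theorem IsHermitian.hasEigenvalue_eigenvalues {A : Matrix n n 𝕜} (hA : A.IsHermitian) (i : n) :
    Module.End.HasEigenvalue (toLin' A) (hA.eigenvalues i : 𝕜) := by
  rw [Module.End.hasEigenvalue_iff_mem_spectrum, spectrum_toLin']
  exact (spectrum.algebraMap_mem_iff 𝕜).mpr (hA.eigenvalues_mem_spectrum_real i)

theorem IsHermitian.posSemidef_of_sum_norm_offDiag_le {A : Matrix n n 𝕜} (hA : A.IsHermitian)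
    (hdom : ∀ i, ∑ j ∈ Finset.univ.erase i, ‖A i j‖ ≤ RCLike.re (A i i)) : A.PosSemidef := by
  refine hA.posSemidef_iff_eigenvalues_nonneg.mpr fun i => ?_
  obtain ⟨k, hk⟩ := eigenvalue_mem_ball (hA.hasEigenvalue_eigenvalues i)
  rw [mem_closedBall_iff_norm'] at hk
  have hre : RCLike.re (A k k) - hA.eigenvalues i ≤ RCLike.re (A k k) := calc
    _ = RCLike.re (A k k - hA.eigenvalues i) := by simp
    _ ≤ ‖A k k - hA.eigenvalues i‖ := RCLike.re_le_norm _
    _ ≤ _ := hk.trans (hdom k)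
  exact sub_le_self_iff _ |>.mp hre

theorem posSemidef_one_sub_two_smul_diagonal_add {W : Matrix n n ℝ} (hsymm : W.IsSymm)
    (hnonneg : ∀ i j, 0 ≤ W i j) (hrow : ∀ i, ∑ j, W i j = 1) :
    (1 - 2 • diagonal (fun k => W k k) + W).PosSemidef := by
  have hB : (1 - 2 • diagonal (fun k => W k k) + W).IsHermitian :=
    isHermitian_iff_isSymm.mpr ((isSymm_one.sub ((isSymm_diagonal _).smul 2)).add hsymm)
  refine hB.posSemidef_of_sum_norm_offDiag_le fun i => le_of_eq ?_
  calc ∑ j ∈ Finset.univ.erase i, ‖(1 - 2 • diagonal (fun k => W k k) + W : Matrix n n ℝ) i j‖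
      = ∑ j ∈ Finset.univ.erase i, W i j :=
        Finset.sum_congr rfl fun j hj => by
          rw [one_sub_two_smul_diagonal_add_apply, if_neg (Finset.ne_of_mem_erase hj).symm,
            Real.norm_of_nonneg (hnonneg i j)]
    _ = 1 - W i i := by rw [Finset.sum_erase_eq_sub (Finset.mem_univ i), hrow]
    _ = _ := by rw [one_sub_two_smul_diagonal_add_apply, if_pos rfl]; rfl

end Matrix

/-- For a symmetric doubly stochastic matrix `W` with nonnegative entries and `α ≥ 0`,
the matrix `B = α (I − 2 diag(W) + W)` is symmetric positive semidefinite. -/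
theorem stmt2 {n : ℕ} (W : Matrix (Fin n) (Fin n) ℝ) (hsymm : W.IsSymm)
    (hnonneg : ∀ i j, 0 ≤ W i j)
    (hstoch : W.mulVec (fun _ => 1) = fun _ => 1)
    (α : ℝ) (hα : 0 ≤ α) :
    (α • ((1 : Matrix (Fin n) (Fin n) ℝ)
        - 2 • Matrix.diagonal (fun i => W i i) + W)).PosSemidef := by
  have hrow (i : Fin n) : ∑ j, W i j = 1 := by
    simpa [mulVec, dotProduct] using congrFun hstoch i
  exact (posSemidef_one_sub_two_smul_diagonal_add hsymm hnonneg hrow).smul hα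
end

section
/- Let α, ε, γ > 0, let A be a real symmetric positive semidefinite N×N matrix with positive semidefinite square root S, and suppose vᵀ A v ≥ γ ‖v‖² for every v in the range of A. Suppose x_1, x_2, g_1, g_2, w_1, w_2 ∈ ℝ^N satisfy g_1 + S w_1 = 0 and g_2 + S w_2 = 0 with w_1, w_2 in the range of A. Then ‖(x_1 − x_2, w_1 − w_2)‖_G ≤ ‖x_1 − x_2‖ + (√(αε)/√γ) ‖g_1 − g_2‖. -/
/-!
The dual variables enter the KKT conditions only through `S`, so it suffices to bound
`‖w₁ − w₂‖` by `‖S (w₁ − w₂)‖ = ‖g₁ − g₂‖`. Since `w₁ − w₂` lies in the range of `A = S²`,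
the restricted strong positivity of `A` gives `γ ‖w‖² ≤ ⟪w, S² w⟫ = ‖S w‖²`.
-/

open Matrix RealInnerProductSpace

/-- The G-norm of a primal-dual pair `(x, v)`: `‖(x,v)‖_G = (‖x‖² + αε‖v‖²)^{1/2}`. -/
noncomputable def GNorm (α ε : ℝ) {N : ℕ} (x v : EuclideanSpace ℝ (Fin N)) : ℝ :=
  Real.sqrt (‖x‖ ^ 2 + α * ε * ‖v‖ ^ 2)

lemma GNorm_le_norm_add (α ε : ℝ) {N : ℕ} (x v : EuclideanSpace ℝ (Fin N)) :
    GNorm α ε x v ≤ ‖x‖ + Real.sqrt (α * ε) * ‖v‖ := by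
  have hαε : α * ε ≤ Real.sqrt (α * ε) ^ 2 := by
    rcases le_total 0 (α * ε) with h | h
    · rw [Real.sq_sqrt h]
    · exact h.trans (sq_nonneg _)
  have hsq : ‖x‖ ^ 2 + α * ε * ‖v‖ ^ 2 ≤ (‖x‖ + Real.sqrt (α * ε) * ‖v‖) ^ 2 := by
    nlinarith [mul_nonneg (norm_nonneg x) (mul_nonneg (Real.sqrt_nonneg (α * ε)) (norm_nonneg v)),
      mul_le_mul_of_nonneg_right hαε (sq_nonneg ‖v‖)]
  calc GNorm α ε x v ≤ Real.sqrt ((‖x‖ + Real.sqrt (α * ε) * ‖v‖) ^ 2) := Real.sqrt_le_sqrt hsq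
    _ = ‖x‖ + Real.sqrt (α * ε) * ‖v‖ := Real.sqrt_sq (by positivity)

section SelfAdjoint

variable {E : Type*} [NormedAddCommGroup E] [InnerProductSpace ℝ E] [CompleteSpace E]
  {T : E →L[ℝ] E}

lemma IsSelfAdjoint.inner_mul_self_apply (hT : IsSelfAdjoint T) (v : E) :
    ⟪v, (T * T) v⟫ = ‖T v‖ ^ 2 :=
  (hT.isSymmetric v (T v)).symm.trans (real_inner_self_eq_norm_sq (T v))

lemma IsSelfAdjoint.sqrt_mul_norm_le_norm_apply (hT : IsSelfAdjoint T) {γ : ℝ} {w : E}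
    (hw : γ * ‖w‖ ^ 2 ≤ ⟪w, (T * T) w⟫) : Real.sqrt γ * ‖w‖ ≤ ‖T w‖ := by
  rw [hT.inner_mul_self_apply] at hw
  calc Real.sqrt γ * ‖w‖ = Real.sqrt (γ * ‖w‖ ^ 2) := by
        rw [Real.sqrt_mul' γ (sq_nonneg _), Real.sqrt_sq (norm_nonneg w)]
    _ ≤ Real.sqrt (‖T w‖ ^ 2) := Real.sqrt_le_sqrt hw
    _ = ‖T w‖ := Real.sqrt_sq (norm_nonneg _)

end SelfAdjoint

theorem stmt12_general {N : ℕ} (α ε γ : ℝ) (hγ : 0 < γ)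
    (A S : Matrix (Fin N) (Fin N) ℝ)
    (hS : S.PosSemidef) (hSS : S * S = A)
    (hquad : ∀ v : EuclideanSpace ℝ (Fin N),
      (∃ w, Matrix.toEuclideanCLM (𝕜 := ℝ) A w = v) →
      γ * ‖v‖ ^ 2 ≤ ⟪v, Matrix.toEuclideanCLM (𝕜 := ℝ) A v⟫)
    (x₁ x₂ g₁ g₂ w₁ w₂ : EuclideanSpace ℝ (Fin N))
    (h₁ : g₁ + Matrix.toEuclideanCLM (𝕜 := ℝ) S w₁ = 0)
    (h₂ : g₂ + Matrix.toEuclideanCLM (𝕜 := ℝ) S w₂ = 0)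
    (hw₁ : ∃ u, Matrix.toEuclideanCLM (𝕜 := ℝ) A u = w₁)
    (hw₂ : ∃ u, Matrix.toEuclideanCLM (𝕜 := ℝ) A u = w₂) :
    GNorm α ε (x₁ - x₂) (w₁ - w₂) ≤
      ‖x₁ - x₂‖ + (Real.sqrt (α * ε) / Real.sqrt γ) * ‖g₁ - g₂‖ := by
  set T := Matrix.toEuclideanCLM (𝕜 := ℝ) S
  have hT : IsSelfAdjoint T := hS.1.isSelfAdjoint.map _
  have hAT : Matrix.toEuclideanCLM (𝕜 := ℝ) A = T * T := by rw [← hSS, map_mul]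
  rw [hAT] at hquad hw₁ hw₂
  obtain ⟨u₁, rfl⟩ := hw₁
  obtain ⟨u₂, rfl⟩ := hw₂
  have hdual : Real.sqrt γ * ‖(T * T) u₁ - (T * T) u₂‖ ≤ ‖g₁ - g₂‖ := by
    have hTw : T ((T * T) u₁ - (T * T) u₂) = -(g₁ - g₂) := by
      rw [map_sub, eq_neg_of_add_eq_zero_right h₁, eq_neg_of_add_eq_zero_right h₂]
      abel
    rw [← norm_neg (g₁ - g₂), ← hTw]
    exact hT.sqrt_mul_norm_le_norm_apply (hquad _ ⟨u₁ - u₂, map_sub _ _ _⟩)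
  calc GNorm α ε (x₁ - x₂) ((T * T) u₁ - (T * T) u₂)
      ≤ ‖x₁ - x₂‖ + Real.sqrt (α * ε) * ‖(T * T) u₁ - (T * T) u₂‖ := GNorm_le_norm_add _ _ _ _
    _ ≤ ‖x₁ - x₂‖ + (Real.sqrt (α * ε) / Real.sqrt γ) * ‖g₁ - g₂‖ := by
      rw [div_mul_eq_mul_div, mul_div_assoc]
      gcongr
      rwa [le_div_iff₀' (Real.sqrt_pos.mpr hγ)]

/-- Bound on the G-norm drift of optimal primal-dual pairs:
`‖(x₁ − x₂, w₁ − w₂)‖_G ≤ ‖x₁ − x₂‖ + (√(αε)/√γ) ‖g₁ − g₂‖` under the KKT conditions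
`gᵢ + S wᵢ = 0` with `wᵢ` in the range of `A = S²`. -/
theorem stmt12 {N : ℕ} (α ε γ : ℝ) (hα : 0 < α) (hε : 0 < ε) (hγ : 0 < γ)
    (A S : Matrix (Fin N) (Fin N) ℝ)
    (hA : A.PosSemidef) (hS : S.PosSemidef) (hSS : S * S = A)
    (hquad : ∀ v : EuclideanSpace ℝ (Fin N),
      (∃ w, Matrix.toEuclideanCLM (𝕜 := ℝ) A w = v) →
      γ * ‖v‖ ^ 2 ≤ ⟪v, Matrix.toEuclideanCLM (𝕜 := ℝ) A v⟫)
    (x₁ x₂ g₁ g₂ w₁ w₂ : EuclideanSpace ℝ (Fin N))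
    (h₁ : g₁ + Matrix.toEuclideanCLM (𝕜 := ℝ) S w₁ = 0)
    (h₂ : g₂ + Matrix.toEuclideanCLM (𝕜 := ℝ) S w₂ = 0)
    (hw₁ : ∃ u, Matrix.toEuclideanCLM (𝕜 := ℝ) A u = w₁)
    (hw₂ : ∃ u, Matrix.toEuclideanCLM (𝕜 := ℝ) A u = w₂) :
    GNorm α ε (x₁ - x₂) (w₁ - w₂) ≤
      ‖x₁ - x₂‖ + (Real.sqrt (α * ε) / Real.sqrt γ) * ‖g₁ - g₂‖ :=
  stmt12_general α ε γ hγ A S hS hSS hquad x₁ x₂ g₁ g₂ w₁ w₂ h₁ h₂ hw₁ hw₂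
end

section
/- Let α, ε, δ, γ > 0, let A be a real symmetric positive semidefinite N×N matrix with positive semidefinite square root S, and suppose vᵀ A v ≥ γ ‖v‖² for every v in the range of A. Let x, v, x*, v*, g : ℕ → ℝ^N be sequences such that for every t: g_t + S v*_t = 0 and v*_t lies in the range of A, and such that for every t ≥ 1 the contraction ‖(x_t − x*_t, v_t − v*_t)‖_G ≤ (1+δ)^{-1/2} ‖(x_{t-1} − x*_t, v_{t-1} − v*_t)‖_G holds. Then for every t ≥ 1, ‖(x_t − x*_t, v_t − v*_t)‖_G ≤ (1+δ)^{-1/2} ( ‖(x_{t-1} − x*_{t-1}, v_{t-1} − v*_{t-1})‖_G + d_t ), where d_t := ‖x*_{t-1} − x*_t‖ + (√(αε)/√γ) ‖g_t − g_{t-1}‖. -/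
open Matrix RealInnerProductSpace

lemma sqrt_quad_tri (c p q r s : ℝ) (hc : 0 ≤ c) (hp : 0 ≤ p) (hq : 0 ≤ q)
    (hr : 0 ≤ r) (hs : 0 ≤ s) :
    Real.sqrt ((p+q)^2 + c*(r+s)^2) ≤ Real.sqrt (p^2 + c*r^2) + Real.sqrt (q^2 + c*s^2) := by
  set a := Real.sqrt (p^2 + c*r^2) with ha
  set b := Real.sqrt (q^2 + c*s^2) with hb
  have ha2 : a^2 = p^2 + c*r^2 := Real.sq_sqrt (by positivity)
  have hb2 : b^2 = q^2 + c*s^2 := Real.sq_sqrt (by positivity)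
  have hab : p*q + c*(r*s) ≤ a*b := by
    have h1 : a*b = Real.sqrt ((p^2+c*r^2)*(q^2+c*s^2)) := (Real.sqrt_mul (by positivity) _).symm
    rw [h1]
    exact (Real.le_sqrt (by positivity) (by positivity)).mpr
      (by nlinarith [sq_nonneg (p*s - q*r)])
  have h2 : (p+q)^2 + c*(r+s)^2 ≤ (a+b)^2 := by nlinarith
  calc Real.sqrt ((p+q)^2 + c*(r+s)^2) ≤ Real.sqrt ((a+b)^2) := Real.sqrt_le_sqrt h2
    _ = a + b := Real.sqrt_sq (by positivity)

lemma gnorm_tri (α ε : ℝ) (hc : 0 ≤ α * ε) {N : ℕ} (a a' b b' : EuclideanSpace ℝ (Fin N)) :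
    GNorm α ε (a + a') (b + b') ≤ GNorm α ε a b + GNorm α ε a' b' := by
  unfold GNorm
  calc Real.sqrt (‖a + a'‖^2 + α*ε*‖b + b'‖^2)
      ≤ Real.sqrt ((‖a‖+‖a'‖)^2 + α*ε*(‖b‖+‖b'‖)^2) := by
        apply Real.sqrt_le_sqrt
        have h1 := pow_le_pow_left₀ (norm_nonneg (a+a')) (norm_add_le a a') 2
        have h2 := pow_le_pow_left₀ (norm_nonneg (b+b')) (norm_add_le b b') 2
        nlinarith [mul_le_mul_of_nonneg_left h2 hc]
    _ ≤ _ := sqrt_quad_tri _ _ _ _ _ hc (norm_nonneg a) (norm_nonneg a')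
        (norm_nonneg b) (norm_nonneg b')

lemma gnorm_le (α ε : ℝ) (hc : 0 ≤ α * ε) {N : ℕ} (a b : EuclideanSpace ℝ (Fin N)) :
    GNorm α ε a b ≤ ‖a‖ + Real.sqrt (α * ε) * ‖b‖ := by
  unfold GNorm
  have h1 : (Real.sqrt (α*ε))^2 = α*ε := Real.sq_sqrt hc
  have h : ‖a‖^2 + α*ε*‖b‖^2 ≤ (‖a‖ + Real.sqrt (α*ε) * ‖b‖)^2 := by
    nlinarith [mul_nonneg (mul_nonneg (Real.sqrt_nonneg (α*ε)) (norm_nonneg a)) (norm_nonneg b)]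
  calc Real.sqrt (‖a‖^2 + α*ε*‖b‖^2) ≤ Real.sqrt ((‖a‖ + Real.sqrt (α*ε)*‖b‖)^2) :=
        Real.sqrt_le_sqrt h
    _ = _ := Real.sqrt_sq (by positivity)

/-- Theorem 1 of the paper: under the KKT conditions `g_t + S v*_t = 0` with `v*_t` in the
range of `A = S²`, the quadratic-form lower bound on the range of `A`, and the per-step
contraction with rate `(1+δ)^{-1/2}`, the primal-dual error satisfies
`‖u_t − u*_t‖_G ≤ (1+δ)^{-1/2} (‖u_{t−1} − u*_{t−1}‖_G + d_t)` where
`d_t = ‖x*_{t−1} − x*_t‖ + (√(αε)/√γ)‖g_t − g_{t−1}‖`. -/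
theorem stmt13 {N : ℕ} (α ε δ γ : ℝ) (hα : 0 < α) (hε : 0 < ε) (hδ : 0 < δ) (hγ : 0 < γ)
    (A S : Matrix (Fin N) (Fin N) ℝ)
    (hA : A.PosSemidef) (hS : S.PosSemidef) (hSS : S * S = A)
    (hquad : ∀ v : EuclideanSpace ℝ (Fin N),
      (∃ w, Matrix.toEuclideanCLM (𝕜 := ℝ) A w = v) →
      γ * ‖v‖ ^ 2 ≤ ⟪v, Matrix.toEuclideanCLM (𝕜 := ℝ) A v⟫)
    (x v xs vs g : ℕ → EuclideanSpace ℝ (Fin N))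
    (hkkt : ∀ t, g t + Matrix.toEuclideanCLM (𝕜 := ℝ) S (vs t) = 0)
    (hrange : ∀ t, ∃ u, Matrix.toEuclideanCLM (𝕜 := ℝ) A u = vs t)
    (hcontr : ∀ t : ℕ, 1 ≤ t →
      GNorm α ε (x t - xs t) (v t - vs t) ≤
        (1 / Real.sqrt (1 + δ)) * GNorm α ε (x (t - 1) - xs t) (v (t - 1) - vs t)) :
    ∀ t : ℕ, 1 ≤ t →
      GNorm α ε (x t - xs t) (v t - vs t) ≤
        (1 / Real.sqrt (1 + δ)) *
          (GNorm α ε (x (t - 1) - xs (t - 1)) (v (t - 1) - vs (t - 1)) +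
            (‖xs (t - 1) - xs t‖ +
              (Real.sqrt (α * ε) / Real.sqrt γ) * ‖g t - g (t - 1)‖)) := by
  intro t ht
  have hcε : (0:ℝ) ≤ α * ε := le_of_lt (mul_pos hα hε)
  set T := Matrix.toEuclideanCLM (𝕜 := ℝ) S with hT
  set w : EuclideanSpace ℝ (Fin N) := vs (t-1) - vs t with hw
  -- T is self-adjoint
  have hstar : star S = S := hS.1
  have hsa : ContinuousLinearMap.adjoint T = T := by
    rw [← ContinuousLinearMap.star_eq_adjoint, hT, ← map_star, hstar]
  -- image of w under T
  have hT1 : T (vs t) = -(g t) := eq_neg_of_add_eq_zero_right (hkkt t)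
  have hT0 : T (vs (t-1)) = -(g (t-1)) := eq_neg_of_add_eq_zero_right (hkkt (t-1))
  have hTw : T w = g t - g (t-1) := by
    rw [hw, map_sub, hT1, hT0]; abel
  -- quadratic bound
  obtain ⟨u0, hu0⟩ := hrange (t-1)
  obtain ⟨u1, hu1⟩ := hrange t
  have hwr : ∃ u, Matrix.toEuclideanCLM (𝕜 := ℝ) A u = w := by
    exact ⟨u0 - u1, by rw [map_sub, hu0, hu1]⟩
  have hAeq : Matrix.toEuclideanCLM (𝕜 := ℝ) A = T * T := by
    rw [← hSS, _root_.map_mul]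
  have hinner : ⟪w, Matrix.toEuclideanCLM (𝕜 := ℝ) A w⟫ = ‖T w‖^2 := by
    rw [hAeq]
    have : (T * T) w = T (T w) := rfl
    rw [this, ← hsa, ContinuousLinearMap.adjoint_inner_right, hsa, real_inner_self_eq_norm_sq]
  have hquadw : γ * ‖w‖^2 ≤ ‖g t - g (t-1)‖^2 := by
    have := hquad w hwr
    rwa [hinner, hTw] at this
  -- √γ ‖w‖ ≤ ‖Δg‖
  have hsg : Real.sqrt γ * ‖w‖ ≤ ‖g t - g (t-1)‖ := by
    have h1 : (Real.sqrt γ * ‖w‖)^2 ≤ ‖g t - g (t-1)‖^2 := by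
      rw [mul_pow, Real.sq_sqrt hγ.le]; exact hquadw
    have := Real.sqrt_le_sqrt h1
    rwa [Real.sqrt_sq (by positivity), Real.sqrt_sq (norm_nonneg _)] at this
  have hvbound : Real.sqrt (α*ε) * ‖w‖ ≤ (Real.sqrt (α*ε) / Real.sqrt γ) * ‖g t - g (t-1)‖ := by
    have hγs : (0:ℝ) < Real.sqrt γ := Real.sqrt_pos.mpr hγ
    have h2 : Real.sqrt (α*ε) * ‖w‖ =
        (Real.sqrt (α*ε) / Real.sqrt γ) * (Real.sqrt γ * ‖w‖) := by
      field_simp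
    rw [h2]
    exact mul_le_mul_of_nonneg_left hsg (by positivity)
  -- triangle inequality for the G-norm
  have hx : x (t-1) - xs t = (x (t-1) - xs (t-1)) + (xs (t-1) - xs t) := by abel
  have hv : v (t-1) - vs t = (v (t-1) - vs (t-1)) + w := by rw [hw]; abel
  have htr : GNorm α ε (x (t-1) - xs t) (v (t-1) - vs t) ≤
      GNorm α ε (x (t-1) - xs (t-1)) (v (t-1) - vs (t-1)) +
        GNorm α ε (xs (t-1) - xs t) w := by
    rw [hx, hv]; exact gnorm_tri α ε hcε _ _ _ _
  have hdt : GNorm α ε (xs (t-1) - xs t) w ≤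
      ‖xs (t-1) - xs t‖ + (Real.sqrt (α*ε) / Real.sqrt γ) * ‖g t - g (t-1)‖ :=
    le_trans (gnorm_le α ε hcε _ _) (by linarith)
  have hfin := hcontr t ht
  have hpos : (0:ℝ) ≤ 1 / Real.sqrt (1 + δ) := by positivity
  calc GNorm α ε (x t - xs t) (v t - vs t)
      ≤ (1 / Real.sqrt (1 + δ)) * GNorm α ε (x (t-1) - xs t) (v (t-1) - vs t) := hfin
    _ ≤ _ := mul_le_mul_of_nonneg_left (by linarith) hpos
end

section
/- Let α, ε, δ, γ > 0, let A be a real symmetric positive semidefinite N×N matrix with positive semidefinite square root S, and suppose vᵀ A v ≥ γ ‖v‖² for every v in the range of A. Let x, v, x*, v*, g : ℕ → ℝ^N be sequences such that for every t: g_t + S v*_t = 0 and v*_t lies in the range of A, and such that for every t ≥ 1 the contraction ‖(x_t − x*_t, v_t − v*_t)‖_G ≤ (1+δ)^{-1/2} ‖(x_{t-1} − x*_t, v_{t-1} − v*_t)‖_G holds. Define d_t := ‖x*_{t-1} − x*_t‖ + (√(αε)/√γ) ‖g_t − g_{t-1}‖ for t ≥ 1 and suppose d_max ∈ ℝ satisfies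 d_t ≤ d_max for all t ≥ 1. Then limsup_{t→∞} ‖x_t − x*_t‖ ≤ d_max / (√(1+δ) − 1), where ‖·‖ is the Euclidean norm. -/
open Matrix RealInnerProductSpace Filter

lemma gnorm_nonneg (α ε : ℝ) {N : ℕ} (x v : EuclideanSpace ℝ (Fin N)) :
    0 ≤ GNorm α ε x v := Real.sqrt_nonneg _

lemma norm_le_gnorm (α ε : ℝ) (hα : 0 < α) (hε : 0 < ε) {N : ℕ}
    (x v : EuclideanSpace ℝ (Fin N)) : ‖x‖ ≤ GNorm α ε x v := by
  have h : ‖x‖ ^ 2 ≤ ‖x‖ ^ 2 + α * ε * ‖v‖ ^ 2 := by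
    have : 0 ≤ α * ε * ‖v‖ ^ 2 := by positivity
    linarith
  calc ‖x‖ = Real.sqrt (‖x‖ ^ 2) := by rw [Real.sqrt_sq (norm_nonneg _)]
    _ ≤ _ := Real.sqrt_le_sqrt h

/-- Key scalar inequality: if `P' ≤ P + u` and `Q' ≤ Q + w` then
`√(P'² + cQ'²) ≤ √(P²+cQ²) + u + √c·w`. -/
lemma sqrt_split (c P Q u w P' Q' : ℝ) (hc : 0 ≤ c) (hP : 0 ≤ P) (hQ : 0 ≤ Q)
    (hu : 0 ≤ u) (hw : 0 ≤ w) (hP'0 : 0 ≤ P') (hQ'0 : 0 ≤ Q')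
    (hP' : P' ≤ P + u) (hQ' : Q' ≤ Q + w) :
    Real.sqrt (P' ^ 2 + c * Q' ^ 2) ≤ Real.sqrt (P ^ 2 + c * Q ^ 2) + u + Real.sqrt c * w := by
  set T := Real.sqrt (P ^ 2 + c * Q ^ 2) with hT
  have hT0 : 0 ≤ T := Real.sqrt_nonneg _
  have hTsq : T ^ 2 = P ^ 2 + c * Q ^ 2 := Real.sq_sqrt (by positivity)
  have hc2 : (Real.sqrt c) ^ 2 = c := Real.sq_sqrt hc
  have hc0 : 0 ≤ Real.sqrt c := Real.sqrt_nonneg _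
  have hTP : P ≤ T := by
    rw [hT]
    calc P = Real.sqrt (P ^ 2) := by rw [Real.sqrt_sq hP]
      _ ≤ _ := Real.sqrt_le_sqrt (by nlinarith [mul_nonneg hc (sq_nonneg Q)])
  have hTQ : Real.sqrt c * Q ≤ T := by
    rw [hT]
    calc Real.sqrt c * Q = Real.sqrt ((Real.sqrt c * Q) ^ 2) := by
          rw [Real.sqrt_sq (by positivity)]
      _ ≤ _ := Real.sqrt_le_sqrt (by nlinarith)
  have hrhs0 : 0 ≤ T + u + Real.sqrt c * w := by positivity
  rw [show T + u + Real.sqrt c * w = Real.sqrt ((T + u + Real.sqrt c * w) ^ 2) by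
    rw [Real.sqrt_sq hrhs0]]
  apply Real.sqrt_le_sqrt
  nlinarith [mul_nonneg hu (mul_nonneg hc0 hw), mul_nonneg hT0 hu,
    mul_nonneg hT0 (mul_nonneg hc0 hw),
    mul_le_mul hP' hP' hP'0 (by linarith),
    mul_le_mul hQ' hQ' hQ'0 (by linarith),
    mul_le_mul_of_nonneg_left hTP hu,
    mul_le_mul_of_nonneg_left hTQ hw]

/-- Corollary 1 of the paper: under the KKT conditions, the quadratic-form lower bound on
the range of `A = S²`, the per-step contraction with rate `(1+δ)^{-1/2}`, and a uniform
bound `d_max` on the optimality drift `d_t`, the primal error of dynamic ESOM satisfies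
`limsup_{t→∞} ‖x_t − x*_t‖ ≤ d_max / (√(1+δ) − 1)`. -/
theorem stmt17 {N : ℕ} (α ε δ γ : ℝ) (hα : 0 < α) (hε : 0 < ε) (hδ : 0 < δ) (hγ : 0 < γ)
    (A S : Matrix (Fin N) (Fin N) ℝ)
    (hA : A.PosSemidef) (hS : S.PosSemidef) (hSS : S * S = A)
    (hquad : ∀ v : EuclideanSpace ℝ (Fin N),
      (∃ w, Matrix.toEuclideanCLM (𝕜 := ℝ) A w = v) →
      γ * ‖v‖ ^ 2 ≤ ⟪v, Matrix.toEuclideanCLM (𝕜 := ℝ) A v⟫)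
    (x v xs vs g : ℕ → EuclideanSpace ℝ (Fin N))
    (hkkt : ∀ t, g t + Matrix.toEuclideanCLM (𝕜 := ℝ) S (vs t) = 0)
    (hrange : ∀ t, ∃ u, Matrix.toEuclideanCLM (𝕜 := ℝ) A u = vs t)
    (hcontr : ∀ t : ℕ, 1 ≤ t →
      GNorm α ε (x t - xs t) (v t - vs t) ≤
        (1 / Real.sqrt (1 + δ)) * GNorm α ε (x (t - 1) - xs t) (v (t - 1) - vs t))
    (dmax : ℝ)
    (hdmax : ∀ t : ℕ, 1 ≤ t →
      ‖xs (t - 1) - xs t‖ +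
        (Real.sqrt (α * ε) / Real.sqrt γ) * ‖g t - g (t - 1)‖ ≤ dmax) :
    limsup (fun t : ℕ => ‖x t - xs t‖) atTop ≤
      dmax / (Real.sqrt (1 + δ) - 1) := by
  -- basic constants
  set s := Real.sqrt (1 + δ) with hs
  have hs1 : 1 < s := by
    have h1 : s ^ 2 = 1 + δ := Real.sq_sqrt (by linarith)
    have h2 : 0 ≤ s := Real.sqrt_nonneg _
    nlinarith
  have hs0 : 0 < s := by linarith
  set ρ := 1 / s with hρ
  have hρ0 : 0 < ρ := by positivity
  have hρ1 : ρ < 1 := by rw [hρ]; rw [div_lt_one hs0]; exact hs1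
  have hγ' : 0 < Real.sqrt γ := Real.sqrt_pos.2 hγ
  -- dmax nonneg
  have hdmax0 : 0 ≤ dmax := by
    have := hdmax 1 le_rfl
    have h1 : (0:ℝ) ≤ ‖xs (1 - 1) - xs 1‖ := norm_nonneg _
    have h2 : (0:ℝ) ≤ (Real.sqrt (α * ε) / Real.sqrt γ) * ‖g 1 - g (1 - 1)‖ := by positivity
    linarith
  -- the G-norm error sequence
  set e : ℕ → ℝ := fun t => GNorm α ε (x t - xs t) (v t - vs t) with he
  -- bound on ‖vs n - vs (n+1)‖ via the gradient difference
  have hvsb : ∀ n : ℕ, Real.sqrt γ * ‖vs n - vs (n + 1)‖ ≤ ‖g (n + 1) - g n‖ := by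
    intro n
    set w : EuclideanSpace ℝ (Fin N) := vs n - vs (n + 1) with hw
    obtain ⟨u1, hu1⟩ := hrange n
    obtain ⟨u2, hu2⟩ := hrange (n + 1)
    have hwr : ∃ u, Matrix.toEuclideanCLM (𝕜 := ℝ) A u = w :=
      ⟨u1 - u2, by rw [map_sub, hu1, hu2]⟩
    have hq := hquad w hwr
    -- ⟪w, A w⟫ = ‖S w‖ ^ 2
    have hAw : Matrix.toEuclideanCLM (𝕜 := ℝ) A w =
        Matrix.toEuclideanCLM (𝕜 := ℝ) S (Matrix.toEuclideanCLM (𝕜 := ℝ) S w) := by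
      rw [← hSS, _root_.map_mul]; rfl
    have hsymm : (Matrix.toEuclideanLin S).IsSymmetric :=
      Matrix.isHermitian_iff_isSymmetric.1 hS.1
    have hinner : ⟪w, Matrix.toEuclideanCLM (𝕜 := ℝ) A w⟫ =
        ‖Matrix.toEuclideanCLM (𝕜 := ℝ) S w‖ ^ 2 := by
      rw [hAw]
      have : ∀ z : EuclideanSpace ℝ (Fin N),
          Matrix.toEuclideanCLM (𝕜 := ℝ) S z = Matrix.toEuclideanLin S z := fun z => rfl
      rw [this w, this (Matrix.toEuclideanLin S w), ← hsymm w (Matrix.toEuclideanLin S w),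
        real_inner_self_eq_norm_sq]
    -- S w = g (n+1) - g n
    have hSw : Matrix.toEuclideanCLM (𝕜 := ℝ) S w = g (n + 1) - g n := by
      have e1 : Matrix.toEuclideanCLM (𝕜 := ℝ) S (vs n) = -g n := by
        have h := hkkt n; rw [add_comm] at h
        exact add_eq_zero_iff_eq_neg.mp h
      have e2 : Matrix.toEuclideanCLM (𝕜 := ℝ) S (vs (n + 1)) = -g (n + 1) := by
        have h := hkkt (n + 1); rw [add_comm] at h
        exact add_eq_zero_iff_eq_neg.mp h
      rw [hw, map_sub, e1, e2]
      abel
    have hq2 : γ * ‖w‖ ^ 2 ≤ ‖g (n + 1) - g n‖ ^ 2 := by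
      rw [← hSw]; rw [hinner] at hq; exact hq
    have hsq : (Real.sqrt γ * ‖w‖) ^ 2 ≤ ‖g (n + 1) - g n‖ ^ 2 := by
      rw [mul_pow, Real.sq_sqrt hγ.le]; exact hq2
    calc Real.sqrt γ * ‖w‖ = Real.sqrt ((Real.sqrt γ * ‖w‖) ^ 2) := by
          rw [Real.sqrt_sq (by positivity)]
      _ ≤ Real.sqrt (‖g (n + 1) - g n‖ ^ 2) := Real.sqrt_le_sqrt hsq
      _ = ‖g (n + 1) - g n‖ := Real.sqrt_sq (norm_nonneg _)
  -- one-step recursion: e (n+1) ≤ ρ * (e n + dmax)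
  have hrec : ∀ n : ℕ, e (n + 1) ≤ ρ * (e n + dmax) := by
    intro n
    have hc := hcontr (n + 1) (Nat.le_add_left 1 n)
    simp only [Nat.add_sub_cancel] at hc
    -- triangle-type bound on the shifted G-norm
    have htri : GNorm α ε (x n - xs (n + 1)) (v n - vs (n + 1)) ≤
        e n + ‖xs n - xs (n + 1)‖ + Real.sqrt (α * ε) * ‖vs n - vs (n + 1)‖ := by
      have hP' : ‖x n - xs (n + 1)‖ ≤ ‖x n - xs n‖ + ‖xs n - xs (n + 1)‖ := by
        calc ‖x n - xs (n + 1)‖ = ‖(x n - xs n) + (xs n - xs (n + 1))‖ := by abel_nf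
          _ ≤ _ := norm_add_le _ _
      have hQ' : ‖v n - vs (n + 1)‖ ≤ ‖v n - vs n‖ + ‖vs n - vs (n + 1)‖ := by
        calc ‖v n - vs (n + 1)‖ = ‖(v n - vs n) + (vs n - vs (n + 1))‖ := by abel_nf
          _ ≤ _ := norm_add_le _ _
      exact sqrt_split (α * ε) ‖x n - xs n‖ ‖v n - vs n‖ ‖xs n - xs (n + 1)‖
        ‖vs n - vs (n + 1)‖ ‖x n - xs (n + 1)‖ ‖v n - vs (n + 1)‖
        (by positivity) (norm_nonneg _) (norm_nonneg _) (norm_nonneg _) (norm_nonneg _)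
        (norm_nonneg _) (norm_nonneg _) hP' hQ'
    have hdrift : ‖xs n - xs (n + 1)‖ + Real.sqrt (α * ε) * ‖vs n - vs (n + 1)‖ ≤ dmax := by
      have hd := hdmax (n + 1) (Nat.le_add_left 1 n)
      simp only [Nat.add_sub_cancel] at hd
      have h2 : Real.sqrt (α * ε) * ‖vs n - vs (n + 1)‖ ≤
          (Real.sqrt (α * ε) / Real.sqrt γ) * ‖g (n + 1) - g n‖ := by
        rw [div_mul_eq_mul_div, le_div_iff₀ hγ']
        have := hvsb n
        calc Real.sqrt (α * ε) * ‖vs n - vs (n + 1)‖ * Real.sqrt γ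
            = Real.sqrt (α * ε) * (Real.sqrt γ * ‖vs n - vs (n + 1)‖) := by ring
          _ ≤ Real.sqrt (α * ε) * ‖g (n + 1) - g n‖ := by
              apply mul_le_mul_of_nonneg_left this (Real.sqrt_nonneg _)
      linarith
    calc e (n + 1) ≤ ρ * GNorm α ε (x n - xs (n + 1)) (v n - vs (n + 1)) := hc
      _ ≤ ρ * (e n + dmax) := by
          apply mul_le_mul_of_nonneg_left _ hρ0.le
          linarith
  -- geometric bound: e n ≤ ρ^n * e 0 + C where C = ρ * dmax / (1 - ρ)
  set C := ρ * dmax / (1 - ρ) with hC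
  have hC0 : 0 ≤ C := by
    apply div_nonneg (by positivity) (by linarith)
  have hgeo : ∀ n : ℕ, e n ≤ ρ ^ n * e 0 + C := by
    intro n
    induction n with
    | zero => simp [hC0, le_add_iff_nonneg_right]
    | succ n ih =>
      have h1 : e (n + 1) ≤ ρ * (ρ ^ n * e 0 + C + dmax) := by
        calc e (n + 1) ≤ ρ * (e n + dmax) := hrec n
          _ ≤ _ := by apply mul_le_mul_of_nonneg_left _ hρ0.le; linarith
      have hkey : ρ * C + ρ * dmax = C := by
        have hne : (1:ℝ) - ρ ≠ 0 := by intro h; rw [sub_eq_zero] at h; exact hρ1.ne h.symm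
        have h2 : C * (1 - ρ) = ρ * dmax := by
          rw [hC]; exact div_mul_cancel₀ _ hne
        ring_nf at h2 ⊢; linarith
      calc e (n + 1) ≤ ρ * (ρ ^ n * e 0 + C + dmax) := h1
        _ = ρ ^ (n + 1) * e 0 + (ρ * C + ρ * dmax) := by ring
        _ = ρ ^ (n + 1) * e 0 + C := by rw [hkey]
  -- pointwise bound on the primal error
  have hpt : ∀ n : ℕ, ‖x n - xs n‖ ≤ ρ ^ n * e 0 + C := fun n =>
    le_trans (norm_le_gnorm α ε hα hε _ _) (hgeo n)
  -- the majorant tends to C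
  have hlim : Tendsto (fun n : ℕ => ρ ^ n * e 0 + C) atTop (nhds C) := by
    have h0 : Tendsto (fun n : ℕ => ρ ^ n) atTop (nhds 0) :=
      tendsto_pow_atTop_nhds_zero_of_lt_one hρ0.le hρ1
    have := (h0.mul_const (e 0)).add_const C
    simpa using this
  have hfinal : limsup (fun t : ℕ => ‖x t - xs t‖) atTop ≤ C := by
    calc limsup (fun t : ℕ => ‖x t - xs t‖) atTop
        ≤ limsup (fun n : ℕ => ρ ^ n * e 0 + C) atTop := by
          refine limsup_le_limsup (Eventually.of_forall hpt) ?_ ?_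
          · exact isCoboundedUnder_le_of_le atTop (fun n => norm_nonneg _)
          · exact hlim.isBoundedUnder_le
      _ = C := hlim.limsup_eq
  -- identify C with the stated bound
  have hsne : s ≠ 0 := ne_of_gt hs0
  have hs1ne : s - 1 ≠ 0 := by intro h; rw [sub_eq_zero] at h; exact hs1.ne' h
  have hCeq : C = dmax / (s - 1) := by
    rw [hC, hρ]
    rw [div_eq_div_iff (sub_ne_zero.mpr hρ1.ne') hs1ne]
    have hinv : s * s⁻¹ = 1 := mul_inv_cancel₀ hsne
    field_simp
    linear_combination dmax * hinv
  rw [← hCeq]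
  exact hfinal
end
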